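/- Let Λ be a nonempty set. The assignments I ↦ F_I and F ↦ I_F are mutually inverse, inclusion-preserving bijections between the set of proper ideals of the ring ℝ^Λ and the set of filters on Λ. In particular, every proper ideal of ℝ^Λ is of the form I_F for some filter F on Λ, and every filter on Λ is of the form F_I for some proper ideal I of ℝ^Λ. -/
import Mathlib

/-- The zero set of `x : Λ → ℝ`. -/
def zeroSet {Λ : Type*} (x : Λ → ℝ) : Set Λ := {l : Λ | x l = 0}

/-- The family `F_I = {Z(x) : x ∈ I}` associated with an ideal `I` of `ℝ^Λ`. -/
def filterOfIdeal {Λ : Type*} (I : Ideal (Λ → ℝ)) : Set (Set Λ) :=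
  {S : Set Λ | ∃ x ∈ I, zeroSet x = S}

/-- The set `I_F = {x : Λ → ℝ | Z(x) ∈ F}` associated with a family `F`. -/
def idealOfFamily {Λ : Type*} (F : Set (Set Λ)) : Set (Λ → ℝ) :=
  {x : Λ → ℝ | zeroSet x ∈ F}

/-- `F` is a filter on `Λ`: a nonempty family with `∅ ∉ F`, closed under
binary intersections and under supersets. -/
def IsFilterOn {Λ : Type*} (F : Set (Set Λ)) : Prop :=
  F.Nonempty ∧ (∅ : Set Λ) ∉ F ∧
    (∀ J K : Set Λ, J ∈ F → K ∈ F → J ∩ K ∈ F) ∧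
    (∀ J K : Set Λ, J ∈ F → J ⊆ K → K ∈ F)

lemma aux_isFilter {Λ : Type*} (I : Ideal (Λ → ℝ)) (hI : I ≠ ⊤) :
    IsFilterOn (filterOfIdeal I) := by
  classical
  refine ⟨⟨Set.univ, 0, I.zero_mem, ?_⟩, ?_, ?_, ?_⟩
  · ext l; simp [zeroSet]
  · rintro ⟨y, hy, hZ⟩
    apply hI
    rw [Ideal.eq_top_iff_one]
    have hy' : ∀ l, y l ≠ 0 := by
      intro l hl
      have : l ∈ zeroSet y := hl
      rw [hZ] at this; exact this
    have : (1 : Λ → ℝ) = (fun l => (y l)⁻¹) * y := by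
      funext l; simp [inv_mul_cancel₀ (hy' l)]
    rw [this]
    exact I.mul_mem_left _ hy
  · rintro J K ⟨x, hx, hxZ⟩ ⟨y, hy, hyZ⟩
    refine ⟨x * x + y * y, I.add_mem (I.mul_mem_left _ hx) (I.mul_mem_left _ hy), ?_⟩
    rw [← hxZ, ← hyZ]
    ext l
    simp only [zeroSet, Set.mem_setOf_eq, Set.mem_inter_iff, Pi.add_apply, Pi.mul_apply]
    constructor
    · intro h
      have h1 : x l * x l = 0 ∧ y l * y l = 0 := by
        constructor <;> nlinarith [mul_self_nonneg (x l), mul_self_nonneg (y l)]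
      exact ⟨by nlinarith [h1.1], by nlinarith [h1.2]⟩
    · rintro ⟨h1, h2⟩; rw [h1, h2]; ring
  · rintro J K ⟨y, hy, hZ⟩ hJK
    refine ⟨y * (fun l => if l ∈ K then 0 else 1), I.mul_mem_right _ hy, ?_⟩
    ext l
    simp only [zeroSet, Set.mem_setOf_eq, Pi.mul_apply]
    by_cases hl : l ∈ K
    · simp [hl]
    · simp only [hl, if_false, mul_one]
      constructor
      · intro h; exact absurd (hJK (hZ ▸ h : l ∈ J)) hl
      · intro h; exact h.elim

lemma aux_ideal_round {Λ : Type*} (I : Ideal (Λ → ℝ)) :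
    idealOfFamily (filterOfIdeal I) = (I : Set (Λ → ℝ)) := by
  ext x
  constructor
  · rintro ⟨y, hy, hZ⟩
    have : x = (fun l => if y l = 0 then 0 else x l / y l) * y := by
      funext l
      simp only [Pi.mul_apply]
      by_cases hl : y l = 0
      · simp only [hl, if_pos, mul_zero]
        have : l ∈ zeroSet x := hZ ▸ (hl : l ∈ zeroSet y)
        exact this
      · simp [hl, div_mul_cancel₀]
    rw [this]
    exact I.mul_mem_left _ hy
  · intro hx
    exact ⟨x, hx, rfl⟩

def filterIdeal {Λ : Type*} (F : Set (Set Λ)) (hF : IsFilterOn F) : Ideal (Λ → ℝ) where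
  carrier := idealOfFamily F
  zero_mem' := by
    obtain ⟨J, hJ⟩ := hF.1
    have : zeroSet (0 : Λ → ℝ) = Set.univ := by ext l; simp [zeroSet]
    show zeroSet (0 : Λ → ℝ) ∈ F
    rw [this]
    exact hF.2.2.2 J _ hJ (Set.subset_univ J)
  add_mem' := by
    intro a b ha hb
    show zeroSet (a + b) ∈ F
    refine hF.2.2.2 _ _ (hF.2.2.1 _ _ ha hb) ?_
    rintro l ⟨h1, h2⟩
    show a l + b l = 0
    rw [show a l = 0 from h1, show b l = 0 from h2]; ring
  smul_mem' := by
    intro c x hx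
    show zeroSet (c * x) ∈ F
    refine hF.2.2.2 _ _ hx ?_
    intro l hl
    show c l * x l = 0
    rw [show x l = 0 from hl]; ring

lemma aux_filter_round {Λ : Type*} (F : Set (Set Λ)) (hF : IsFilterOn F) :
    filterOfIdeal (filterIdeal F hF) = F := by
  classical
  ext S
  constructor
  · rintro ⟨x, hx, hZ⟩
    exact hZ ▸ hx
  · intro hS
    refine ⟨fun l => if l ∈ S then 0 else 1, ?_, ?_⟩
    · show zeroSet _ ∈ F
      have : zeroSet (fun l => if l ∈ S then (0:ℝ) else 1) = S := by
        ext l; by_cases hl : l ∈ S <;> simp [zeroSet, hl]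
      rw [this]; exact hS
    · ext l; by_cases hl : l ∈ S <;> simp [zeroSet, hl]

lemma filterIdeal_ne_top {Λ : Type*} (F : Set (Set Λ)) (hF : IsFilterOn F) :
    filterIdeal F hF ≠ ⊤ := by
  intro h
  have h1 : (1 : Λ → ℝ) ∈ filterIdeal F hF := h ▸ Submodule.mem_top
  have : zeroSet (1 : Λ → ℝ) = ∅ := by ext l; simp [zeroSet]
  exact hF.2.1 (this ▸ h1)

/-- For a nonempty set `Λ`, the assignments `I ↦ F_I` and `F ↦ I_F` are
mutually inverse, inclusion-preserving bijections between proper ideals of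
`ℝ^Λ` and filters on `Λ`. In particular every proper ideal arises as `I_F`
for some filter `F`, and every filter arises as `F_I` for some proper
ideal `I`. -/
theorem ideal_filter_galois_correspondence (Λ : Type*) [Nonempty Λ] :
    (∀ I : Ideal (Λ → ℝ), I ≠ ⊤ →
      IsFilterOn (filterOfIdeal I) ∧
      idealOfFamily (filterOfIdeal I) = (I : Set (Λ → ℝ))) ∧
    (∀ F : Set (Set Λ), IsFilterOn F →
      ∃ I : Ideal (Λ → ℝ), I ≠ ⊤ ∧ (I : Set (Λ → ℝ)) = idealOfFamily F ∧
        filterOfIdeal I = F) ∧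
    (∀ I J : Ideal (Λ → ℝ), I ≠ ⊤ → J ≠ ⊤ →
      ((I : Set (Λ → ℝ)) ⊆ (J : Set (Λ → ℝ)) ↔
        filterOfIdeal I ⊆ filterOfIdeal J)) ∧
    (∀ F G : Set (Set Λ), IsFilterOn F → IsFilterOn G →
      (F ⊆ G ↔ idealOfFamily F ⊆ idealOfFamily G)) := by
  refine ⟨fun I hI => ⟨aux_isFilter I hI, aux_ideal_round I⟩,
    fun F hF => ⟨filterIdeal F hF, filterIdeal_ne_top F hF, rfl, aux_filter_round F hF⟩,
    fun I J hI hJ => ⟨?_, ?_⟩, fun F G hF hG => ⟨?_, ?_⟩⟩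
  · rintro h S ⟨x, hx, hZ⟩; exact ⟨x, h hx, hZ⟩
  · intro h x hx
    have : x ∈ idealOfFamily (filterOfIdeal J) := h ⟨x, hx, rfl⟩
    rw [aux_ideal_round J] at this; exact this
  · intro h x hx; exact h hx
  · intro h S hS
    classical
    set x : Λ → ℝ := fun l => if l ∈ S then 0 else 1 with hxdef
    have hZ : zeroSet x = S := by
      ext l; by_cases hl : l ∈ S <;> simp [zeroSet, x, hl]
    have h1 : x ∈ idealOfFamily F := by
      show zeroSet x ∈ F; rw [hZ]; exact hS
    have h2 : zeroSet x ∈ G := h h1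
    rwa [hZ] at h2
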